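/- arXiv:1812.10575 — 3 statements merged into one kernel-verified Lean document; each statement's English description precedes it below -/
import Mathlib

section
/- With the same setup as the consistency lemma (fixed points $x^1,\dots,x^N$, uniformly random partition into batches of size $p \ge 2$, $N = pn \ge 3$), the variance of the random batch force error satisfies $\mathbb{E}|\chi_i|^2 = \left(\frac{1}{p-1} - \frac{1}{N-1}\right) \Lambda_i(x)$, where $\Lambda_i(x) = \frac{1}{N-2}\sum_{j \ne i} \left| K(x^i - x^j) - \frac{1}{N-1}\sum_{k \ne i} K(x^i - x^k) \right|^2$. -/
/-!
Put `yʲ = K(xⁱ - xʲ) - m`, where `m` is the mean over `j ≠ i`, so that `∑_{j ≠ i} yʲ = 0` and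
`χ_i = (p - 1)⁻¹ ∑_{j ∈ C \ {i}} yʲ`. Expanding the square, the sum over all partitions only sees
how many partitions put a given `j`, resp. a given pair `j ≠ k`, in the batch of `i`. Relabelling
by permutations fixing `i` shows that these numbers `c₁`, `c₂` do not depend on `j`, `k`, and
double counting gives `(N - 1) c₁ = M (p - 1)` and `(N - 2) c₂ = (p - 2) c₁`, `M` being the number
of partitions. Since `∑ yʲ = 0`, the cross terms contribute `-c₂ ∑ |yʲ|²`, which leaves
`(c₁ - c₂) ∑ |yʲ|²`: the variance formula for sampling `p - 1` of the `N - 1` other indices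
without replacement.
-/

open Finset

section Centering

variable {α V : Type*} [AddCommGroup V] [Module ℝ V] {s : Finset α} {c : ℝ}

theorem inv_smul_sum_sub_of_card_eq (hc : c ≠ 0) (hs : (#s : ℝ) = c) (f : α → V) (m : V) :
    c⁻¹ • ∑ j ∈ s, f j - m = c⁻¹ • ∑ j ∈ s, (f j - m) := by
  rw [sum_sub_distrib, sum_const, smul_sub, ← Nat.cast_smul_eq_nsmul ℝ, hs, smul_smul,
    inv_mul_cancel₀ hc, one_smul]

theorem sum_sub_inv_smul_sum_of_card_eq (hc : c ≠ 0) (hs : (#s : ℝ) = c) (f : α → V) :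
    ∑ j ∈ s, (f j - c⁻¹ • ∑ k ∈ s, f k) = 0 := by
  have h := inv_smul_sum_sub_of_card_eq hc hs f (c⁻¹ • ∑ k ∈ s, f k)
  rwa [sub_self, eq_comm, smul_eq_zero, or_iff_right (inv_ne_zero hc)] at h

end Centering

section BalancedFamily

variable {ι α V : Type*} [DecidableEq α] [NormedAddCommGroup V] [InnerProductSpace ℝ V]
  {S : Finset ι} {E : Finset α} {B : ι → Finset α}

theorem sum_sum_eq_sum_card_filter_smul {M : Type*} [AddCommMonoid M] (hB : ∀ P ∈ S, B P ⊆ E)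
    (f : α → M) : ∑ P ∈ S, ∑ j ∈ B P, f j = ∑ j ∈ E, #{P ∈ S | j ∈ B P} • f j := by
  rw [sum_comm' (t' := E) (s' := fun j => {P ∈ S | j ∈ B P})]
  · simp_rw [sum_const]
  · intro P j
    rw [mem_filter]
    exact ⟨fun h => ⟨⟨h.1, h.2⟩, hB P h.1 h.2⟩, fun h => h.1⟩

theorem sum_norm_sq_sum_eq_of_balanced {c₁ c₂ : ℕ} {y : α → V} (hB : ∀ P ∈ S, B P ⊆ E)
    (h₁ : ∀ j ∈ E, #{P ∈ S | j ∈ B P} = c₁)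
    (h₂ : ∀ j ∈ E, ∀ k ∈ E, j ≠ k → #{P ∈ S | j ∈ B P ∧ k ∈ B P} = c₂)
    (hy : ∑ j ∈ E, y j = 0) :
    ∑ P ∈ S, ‖∑ j ∈ B P, y j‖ ^ 2 = ((c₁ : ℝ) - c₂) * ∑ j ∈ E, ‖y j‖ ^ 2 := by
  have hrow : ∀ j ∈ E, ∑ k ∈ E, #{P ∈ S | j ∈ B P ∧ k ∈ B P} • inner ℝ (y j) (y k)
      = ((c₁ : ℝ) - c₂) * ‖y j‖ ^ 2 := by
    intro j hj
    have hoff : ∑ k ∈ E.erase j, inner ℝ (y j) (y k) = -‖y j‖ ^ 2 := by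
      have h := inner_sum (𝕜 := ℝ) E y (y j)
      rw [hy, inner_zero_right, ← add_sum_erase E _ hj, real_inner_self_eq_norm_sq] at h
      linarith
    rw [← add_sum_erase E _ hj, sum_congr rfl fun k hk => by
      rw [h₂ j hj k (mem_of_mem_erase hk) (ne_of_mem_erase hk).symm], ← smul_sum]
    simp only [and_self]
    rw [h₁ j hj, hoff, real_inner_self_eq_norm_sq, nsmul_eq_mul, nsmul_eq_mul]
    ring
  have hBB : ∀ P ∈ S, B P ×ˢ B P ⊆ E ×ˢ E := fun P hP => product_subset_product (hB P hP) (hB P hP)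
  calc ∑ P ∈ S, ‖∑ j ∈ B P, y j‖ ^ 2
      = ∑ P ∈ S, ∑ jk ∈ B P ×ˢ B P, inner ℝ (y jk.1) (y jk.2) := by
        simp_rw [← real_inner_self_eq_norm_sq, sum_inner, inner_sum, sum_product]
    _ = ∑ j ∈ E, ∑ k ∈ E, #{P ∈ S | j ∈ B P ∧ k ∈ B P} • inner ℝ (y j) (y k) := by
        rw [sum_sum_eq_sum_card_filter_smul hBB, sum_product]
        simp_rw [mem_product]
    _ = ((c₁ : ℝ) - c₂) * ∑ j ∈ E, ‖y j‖ ^ 2 := by rw [sum_congr rfl hrow, mul_sum]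

theorem mul_sum_norm_sq_sum_of_balanced {q c₁ c₂ : ℕ} {y : α → V} (hB : ∀ P ∈ S, B P ⊆ E)
    (hq : ∀ P ∈ S, #(B P) = q) (h₁ : ∀ j ∈ E, #{P ∈ S | j ∈ B P} = c₁)
    (h₂ : ∀ j ∈ E, ∀ k ∈ E, j ≠ k → #{P ∈ S | j ∈ B P ∧ k ∈ B P} = c₂)
    (hy : ∑ j ∈ E, y j = 0) :
    (#E : ℝ) * (#E - 1) * ∑ P ∈ S, ‖∑ j ∈ B P, y j‖ ^ 2
      = #S * q * (#E - q) * ∑ j ∈ E, ‖y j‖ ^ 2 := by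
  rw [sum_norm_sq_sum_eq_of_balanced hB h₁ h₂ hy]
  rcases E.eq_empty_or_nonempty with rfl | ⟨j, hj⟩
  · simp
  have hc₁ : (#E : ℝ) * c₁ = #S * q := by
    have h := sum_sum_eq_sum_card_filter_smul hB (fun _ => 1)
    simp only [sum_const, smul_eq_mul, mul_one] at h
    rw [sum_congr rfl h₁, sum_congr rfl hq, sum_const, sum_const, smul_eq_mul, smul_eq_mul] at h
    exact_mod_cast h.symm
  have hc₂ : ((#E : ℝ) - 1) * c₂ = c₁ * (q - 1) := by
    have hB' : ∀ P ∈ {P ∈ S | j ∈ B P}, (B P).erase j ⊆ E.erase j :=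
      fun P hP => erase_subset_erase j (hB P (mem_filter.1 hP).1)
    have h := sum_sum_eq_sum_card_filter_smul hB' (fun _ => (1 : ℝ))
    simp only [sum_const, nsmul_eq_mul, mul_one] at h
    calc ((#E : ℝ) - 1) * c₂
        = ∑ k ∈ E.erase j, (#{P ∈ {P ∈ S | j ∈ B P} | k ∈ (B P).erase j} : ℝ) := by
          rw [sum_congr rfl fun k hk => ?_, sum_const, nsmul_eq_mul, cast_card_erase_of_mem hj]
          rw [filter_filter]
          simp only [mem_erase, ne_of_mem_erase hk, ne_eq, not_false_eq_true, true_and]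
          exact_mod_cast h₂ j hj k (mem_of_mem_erase hk) (ne_of_mem_erase hk).symm
      _ = ∑ P ∈ {P ∈ S | j ∈ B P}, (#((B P).erase j) : ℝ) := h.symm
      _ = c₁ * (q - 1) := by
          rw [sum_congr rfl fun P hP => ?_, sum_const, nsmul_eq_mul, h₁ j hj]
          rw [mem_filter] at hP
          rw [cast_card_erase_of_mem hP.2, hq P hP.1]
  linear_combination (∑ j ∈ E, ‖y j‖ ^ 2) * ((#E - q : ℝ) * hc₁ - #E * hc₂)

end BalancedFamily

namespace Finpartition

variable {α : Type*} [Fintype α] [DecidableEq α]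

instance : SMul (Equiv.Perm α) (Finpartition (univ : Finset α)) where
  smul σ P := (P.map { σ.finsetCongr with map_rel_iff' := map_subset_map }).copy
    (map_univ_equiv σ)

theorem parts_smul (σ : Equiv.Perm α) (P : Finpartition (univ : Finset α)) :
    (σ • P).parts = P.parts.map σ.finsetCongr.toEmbedding := rfl

instance : MulAction (Equiv.Perm α) (Finpartition (univ : Finset α)) where
  one_smul P := by
    ext1; rw [parts_smul, Equiv.Perm.one_def, Equiv.finsetCongr_refl]; exact map_refl
  mul_smul σ τ P := by
    ext1; rw [parts_smul, parts_smul, parts_smul, map_map, Equiv.Perm.mul_def,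
      ← Equiv.finsetCongr_trans]; rfl

theorem smul_part_apply (σ : Equiv.Perm α) (P : Finpartition (univ : Finset α)) (a : α) :
    (σ • P).part (σ a) = (P.part a).map σ.toEmbedding :=
  part_eq_of_mem _ (by simp [parts_smul, Equiv.finsetCongr_apply, map_map])
    (mem_map_of_mem _ (P.mem_part (mem_univ a)))

variable {σ : Equiv.Perm α} {P : Finpartition (univ : Finset α)}

theorem apply_mem_smul_part_apply_iff {a b : α} : σ a ∈ (σ • P).part (σ b) ↔ a ∈ P.part b := by
  simp [smul_part_apply]

variable (α) in
def batchings (p : ℕ) : Finset (Finpartition (univ : Finset α)) := {P | ∀ b ∈ P.parts, #b = p}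

variable {p : ℕ}

theorem coe_batchings :
    (batchings α p : Set (Finpartition (univ : Finset α))) = {P | ∀ b ∈ P.parts, #b = p} := by
  simp [batchings]

theorem smul_mem_batchings (σ : Equiv.Perm α) (hP : P ∈ batchings α p) :
    σ • P ∈ batchings α p := by
  simp only [batchings, mem_filter, mem_univ, true_and, parts_smul, mem_map] at hP ⊢
  rintro _ ⟨b, hb, rfl⟩
  simpa [Equiv.finsetCongr_apply] using hP b hb

theorem card_filter_smul_batchings (σ : Equiv.Perm α) (T : Finpartition (univ : Finset α) → Prop)
    [DecidablePred T] : #{P ∈ batchings α p | T (σ • P)} = #{P ∈ batchings α p | T P} := by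
  refine card_nbij' (σ • ·) (σ⁻¹ • ·) ?_ ?_ (fun P _ => inv_smul_smul σ P)
    (fun P _ => smul_inv_smul σ P)
  · intro P hP
    simp only [coe_filter, Set.mem_ofPred_eq] at hP ⊢
    exact ⟨smul_mem_batchings σ hP.1, hP.2⟩
  · intro P hP
    simp only [coe_filter, Set.mem_ofPred_eq, smul_inv_smul] at hP ⊢
    exact ⟨smul_mem_batchings σ⁻¹ hP.1, hP.2⟩

theorem card_filter_mem_part_eq {i j j' : α} (hj : j ≠ i) (hj' : j' ≠ i) :
    #{P ∈ batchings α p | j ∈ P.part i} = #{P ∈ batchings α p | j' ∈ P.part i} := by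
  set σ := Equiv.swap j j'
  rw [← card_filter_smul_batchings σ (fun Q => j' ∈ Q.part i)]
  congr 1
  refine filter_congr fun P _ => ?_
  rw [← apply_mem_smul_part_apply_iff (σ := σ), Equiv.swap_apply_left,
    Equiv.swap_apply_of_ne_of_ne hj.symm hj'.symm]

theorem card_filter_pair_mem_part_eq {i j k j' k' : α} (hj : j ≠ i) (hk : k ≠ i) (hjk : j ≠ k)
    (hj' : j' ≠ i) (hk' : k' ≠ i) (hjk' : j' ≠ k') :
    #{P ∈ batchings α p | j ∈ P.part i ∧ k ∈ P.part i}
      = #{P ∈ batchings α p | j' ∈ P.part i ∧ k' ∈ P.part i} := by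
  have inj {j k : α} (hj : j ≠ i) (hk : k ≠ i) (hjk : j ≠ k) : Function.Injective ![i, j, k] := by
    intro a b h; fin_cases a <;> fin_cases b <;> simp_all [eq_comm]
  obtain ⟨σ, hσ⟩ := Equiv.Perm.exists_extending_pair _ _ (inj hj hk hjk) (inj hj' hk' hjk')
  rw [← card_filter_smul_batchings σ (fun Q => j' ∈ Q.part i ∧ k' ∈ Q.part i)]
  congr 1
  refine filter_congr fun P _ => ?_
  have hσi : σ i = i := hσ 0
  have hσj : σ j = j' := hσ 1
  have hσk : σ k = k' := hσ 2
  rw [← apply_mem_smul_part_apply_iff (σ := σ), ← apply_mem_smul_part_apply_iff (σ := σ) (a := k),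
    hσi, hσj, hσk]

theorem batchings_nonempty (hp : p ∣ Fintype.card α) : (batchings α p).Nonempty := by
  have h : Fintype.card α / p * p + 0 * (p + 1) = #(univ : Finset α) := by
    rw [zero_mul, add_zero, card_univ, Nat.div_mul_cancel hp]
  refine ⟨(⊥ : Finpartition (univ : Finset α)).equitabilise h, mem_filter.2 ⟨mem_univ _, ?_⟩⟩
  have hbig := card_filter_equitabilise_big (⊥ : Finpartition (univ : Finset α)) h
  rw [card_eq_zero, filter_eq_empty_iff] at hbig
  exact fun b hb => (card_eq_of_mem_parts_equitabilise hb).resolve_right (hbig hb)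

theorem exists_forall_card_filter_mem_erase_part_eq (p : ℕ) (i : α) :
    ∃ c, ∀ j ∈ univ.erase i, #{P ∈ batchings α p | j ∈ (P.part i).erase i} = c := by
  by_cases h : ∃ j, j ≠ i
  · obtain ⟨j₀, hj₀⟩ := h
    refine ⟨#{P ∈ batchings α p | j₀ ∈ P.part i}, fun j hj => ?_⟩
    rw [mem_erase] at hj
    simp only [mem_erase, hj.1, ne_eq, not_false_eq_true, true_and]
    exact card_filter_mem_part_eq hj.1 hj₀
  · exact ⟨0, fun j hj => absurd ⟨j, (mem_erase.1 hj).1⟩ h⟩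

theorem exists_forall_card_filter_pair_mem_erase_part_eq (p : ℕ) (i : α) :
    ∃ c, ∀ j ∈ univ.erase i, ∀ k ∈ univ.erase i, j ≠ k →
      #{P ∈ batchings α p | j ∈ (P.part i).erase i ∧ k ∈ (P.part i).erase i} = c := by
  by_cases h : ∃ j k, j ≠ i ∧ k ≠ i ∧ j ≠ k
  · obtain ⟨j₀, k₀, hj₀, hk₀, hjk₀⟩ := h
    refine ⟨#{P ∈ batchings α p | j₀ ∈ P.part i ∧ k₀ ∈ P.part i}, fun j hj k hk hjk => ?_⟩
    rw [mem_erase] at hj hk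
    simp only [mem_erase, hj.1, hk.1, ne_eq, not_false_eq_true, true_and]
    exact card_filter_pair_mem_part_eq hj.1 hk.1 hjk hj₀ hk₀ hjk₀
  · exact ⟨0, fun j hj k hk hjk => absurd ⟨j, k, (mem_erase.1 hj).1, (mem_erase.1 hk).1, hjk⟩ h⟩

theorem card_erase_part_of_mem_batchings (hP : P ∈ batchings α p) (i : α) :
    #((P.part i).erase i) = p - 1 := by
  rw [card_erase_of_mem (P.mem_part (mem_univ i)),
    (mem_filter.1 hP).2 _ (P.part_mem.2 (mem_univ i))]

theorem mul_sum_norm_sq_sum_erase_part_batchings {V : Type*} [NormedAddCommGroup V]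
    [InnerProductSpace ℝ V] (hp : 0 < p) (i : α) {y : α → V}
    (hy : ∑ j ∈ univ.erase i, y j = 0) :
    ((Fintype.card α : ℝ) - 1) * (Fintype.card α - 2)
        * ∑ P ∈ batchings α p, ‖∑ j ∈ (P.part i).erase i, y j‖ ^ 2
      = #(batchings α p) * (p - 1) * (Fintype.card α - p)
        * ∑ j ∈ univ.erase i, ‖y j‖ ^ 2 := by
  obtain ⟨c₁, hc₁⟩ := exists_forall_card_filter_mem_erase_part_eq p i
  obtain ⟨c₂, hc₂⟩ := exists_forall_card_filter_pair_mem_erase_part_eq p i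
  have h := mul_sum_norm_sq_sum_of_balanced (fun P _ => erase_subset_erase i (subset_univ _))
    (fun P hP => card_erase_part_of_mem_batchings hP i) hc₁ hc₂ hy
  rw [cast_card_erase_of_mem (mem_univ i), card_univ, Nat.cast_sub hp, Nat.cast_one] at h
  linear_combination h

end Finpartition

open Finpartition in
theorem stmt_4_general (d p n : ℕ) (hp : 2 ≤ p) (hN : 3 ≤ p * n)
    (K : EuclideanSpace ℝ (Fin d) → EuclideanSpace ℝ (Fin d))
    (x : Fin (p * n) → EuclideanSpace ℝ (Fin d)) (i : Fin (p * n)) :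
    (∑ᶠ P ∈ {P : Finpartition (Finset.univ : Finset (Fin (p * n))) |
          ∀ b ∈ P.parts, b.card = p},
        ‖((p : ℝ) - 1)⁻¹ • ∑ j ∈ (P.part i).erase i, K (x i - x j)
          - (((p * n : ℕ) : ℝ) - 1)⁻¹ • ∑ j ∈ Finset.univ.erase i, K (x i - x j)‖ ^ 2)
      / ({P : Finpartition (Finset.univ : Finset (Fin (p * n))) |
          ∀ b ∈ P.parts, b.card = p}.ncard : ℝ)
      = (((p : ℝ) - 1)⁻¹ - (((p * n : ℕ) : ℝ) - 1)⁻¹)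
        * ((((p * n : ℕ) : ℝ) - 2)⁻¹
          * ∑ j ∈ Finset.univ.erase i,
              ‖K (x i - x j)
                - (((p * n : ℕ) : ℝ) - 1)⁻¹ • ∑ k ∈ Finset.univ.erase i, K (x i - x k)‖ ^ 2) := by
  have h2 : (2 : ℝ) ≤ p := by exact_mod_cast hp
  have h3 : (3 : ℝ) ≤ (p * n : ℕ) := by exact_mod_cast hN
  have hp₁ : (p : ℝ) - 1 ≠ 0 := by linarith
  have hN₁ : ((p * n : ℕ) : ℝ) - 1 ≠ 0 := by linarith
  have hN₂ : ((p * n : ℕ) : ℝ) - 2 ≠ 0 := by linarith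
  set m := (((p * n : ℕ) : ℝ) - 1)⁻¹ • ∑ k ∈ univ.erase i, K (x i - x k)
  have hy : ∑ j ∈ univ.erase i, (K (x i - x j) - m) = 0 :=
    sum_sub_inv_smul_sum_of_card_eq hN₁
      (by rw [cast_card_erase_of_mem (mem_univ i), card_univ, Fintype.card_fin]) _
  have hχ : ∀ P ∈ batchings (Fin (p * n)) p,
      ‖((p : ℝ) - 1)⁻¹ • ∑ j ∈ (P.part i).erase i, K (x i - x j) - m‖ ^ 2
      = ((p : ℝ) - 1)⁻¹ ^ 2 * ‖∑ j ∈ (P.part i).erase i, (K (x i - x j) - m)‖ ^ 2 :=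
    fun P hP => by
      rw [inv_smul_sum_sub_of_card_eq hp₁
          (by rw [card_erase_part_of_mem_batchings hP, Nat.cast_pred (by omega)]),
        norm_smul, mul_pow, Real.norm_eq_abs, sq_abs]
  have key := mul_sum_norm_sq_sum_erase_part_batchings (by omega : 0 < p) i hy
  rw [Fintype.card_fin] at key
  have hM : (#(batchings (Fin (p * n)) p) : ℝ) ≠ 0 :=
    Nat.cast_ne_zero.2 (batchings_nonempty (by simp)).card_pos.ne'
  rw [← coe_batchings, finsum_mem_coe_finset, Set.ncard_coe_finset, sum_congr rfl hχ, ← mul_sum,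
    div_eq_iff hM]
  field_simp
  linear_combination key

/-- Variance of the random batch force error: with fixed points `x¹,…,x^N` (`N = p*n ≥ 3`,
`p ≥ 2`) and a uniformly random partition into batches of size `p`,
`𝔼|χ_i|² = (1/(p-1) - 1/(N-1)) Λ_i(x)` where
`Λ_i(x) = (N-2)⁻¹ ∑_{j≠i} |K(xⁱ-xʲ) - (N-1)⁻¹ ∑_{k≠i} K(xⁱ-xᵏ)|²`.
The expectation over the uniform partition is expressed as the sum over all admissible
partitions divided by their number. -/
theorem stmt_4 (d p n : ℕ) (hp : 2 ≤ p) (hn : 0 < n) (hN : 3 ≤ p * n)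
    (K : EuclideanSpace ℝ (Fin d) → EuclideanSpace ℝ (Fin d))
    (x : Fin (p * n) → EuclideanSpace ℝ (Fin d)) (i : Fin (p * n)) :
    (∑ᶠ P ∈ {P : Finpartition (Finset.univ : Finset (Fin (p * n))) |
          ∀ b ∈ P.parts, b.card = p},
        ‖((p : ℝ) - 1)⁻¹ • ∑ j ∈ (P.part i).erase i, K (x i - x j)
          - (((p * n : ℕ) : ℝ) - 1)⁻¹ • ∑ j ∈ Finset.univ.erase i, K (x i - x j)‖ ^ 2)
      / ({P : Finpartition (Finset.univ : Finset (Fin (p * n))) |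
          ∀ b ∈ P.parts, b.card = p}.ncard : ℝ)
      = (((p : ℝ) - 1)⁻¹ - (((p * n : ℕ) : ℝ) - 1)⁻¹)
        * ((((p * n : ℕ) : ℝ) - 2)⁻¹
          * ∑ j ∈ Finset.univ.erase i,
              ‖K (x i - x j)
                - (((p * n : ℕ) : ℝ) - 1)⁻¹ • ∑ k ∈ Finset.univ.erase i, K (x i - x k)‖ ^ 2) :=
  stmt_4_general d p n hp hN K x i
end

section
/- For two-particle batches ($p = 2$) with Coulomb repulsion in one dimension, the ODE system $\dot{X}^i = \frac{1}{X^i - X^j}$, $\dot{X}^j = \frac{1}{X^j - X^i}$ with $X^i(0) \ne X^j(0)$ has the exact solution over a time step $\tau$: $X^i(\tau) = \frac{1}{2}(X^i(0) + X^j(0)) + \frac{1}{2}\,\mathrm{sgn}(X^i(0) - X^j(0)) \sqrt{|X^i(0)-X^j(0)|^2 + 4\tau}$ and $X^j(\tau) = \frac{1}{2}(X^i(0) + X^j(0)) - \frac{1}{2}\,\mathrm{sgn}(X^i(0) - X^j(0)) \sqrt{|X^i(0)-X^j(0)|^2 + 4\tau}$. In particular the sum $X^i + X^j$ is conserved and $(X^i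 - X^j)^2$ grows linearly with rate $4$. -/
/-!
The sum `x + y` has derivative `1 / (x - y) + 1 / (y - x) = 0`, so it is conserved, while the gap
`d = x - y` solves `d' = 2 / d`, whence `(d ^ 2)' = 4` as long as `d ≠ 0`. So `d ^ 2 - 4 t` is
constant, `d` cannot vanish and thus keeps the sign of `d 0`, which gives
`d τ = sgn (d 0) * √(d 0 ^ 2 + 4 τ)`; `x τ` and `y τ` are half the sum plus and minus half
the gap.
-/

open Set

theorem IsPreconnected.eq_sign_mul_abs_of_ne_zero {f : ℝ → ℝ} {s : Set ℝ} (hs : IsPreconnected s)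
    (hf : ContinuousOn f s) (hf0 : ∀ t ∈ s, f t ≠ 0) {t u : ℝ} (ht : t ∈ s) (hu : u ∈ s) :
    f t = Real.sign (f u) * |f t| := by
  have habs_ne : ∀ {v}, v ∈ s → |f v| ≠ 0 := fun hv => abs_ne_zero.mpr (hf0 _ hv)
  rcases hs.eq_or_eq_neg_of_sq_eq hf hf.abs (fun v _ => (sq_abs (f v)).symm) habs_ne with
    hpos | hneg
  · have hu_pos : 0 < f u := (hpos hu).symm ▸ abs_pos.mpr (hf0 u hu)
    rw [Real.sign_of_pos hu_pos, one_mul]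
    exact hpos ht
  · have hu_neg : f u < 0 := by
      have := hneg hu
      simp only [Pi.neg_apply] at this
      linarith [abs_pos.mpr (hf0 u hu)]
    rw [Real.sign_of_neg hu_neg, neg_one_mul]
    exact hneg ht

section DivODE

variable {d : ℝ → ℝ} {a b c : ℝ}

theorem hasDerivAt_sq_of_hasDerivAt_div {t : ℝ} (h : HasDerivAt d (c / d t) t) :
    HasDerivAt (fun s => d s ^ 2) (if d t = 0 then 0 else 2 * c) t := by
  refine (h.pow 2).congr_deriv ?_
  split_ifs with h0
  · simp [h0]
  · field_simp
    ring

/-- Thanks to the junk value `c / 0 = 0`, the derivative of `d ^ 2` is `0` or `2 * c`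
everywhere, so `d ^ 2` cannot decrease and `d` never reaches `0`. -/
theorem monotoneOn_sq_of_hasDerivAt_div (hc : 0 ≤ c)
    (hd : ∀ t ∈ Icc a b, HasDerivAt d (c / d t) t) :
    MonotoneOn (fun t => d t ^ 2) (Icc a b) := by
  refine monotoneOn_of_hasDerivWithinAt_nonneg (convex_Icc a b)
    (fun t ht => (hasDerivAt_sq_of_hasDerivAt_div (hd t ht)).continuousAt.continuousWithinAt)
    (fun t ht => (hasDerivAt_sq_of_hasDerivAt_div (hd t (interior_subset ht))).hasDerivWithinAt)
    fun t _ => ?_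
  split_ifs <;> positivity

theorem ne_zero_of_hasDerivAt_div (hc : 0 ≤ c) (ha : d a ≠ 0)
    (hd : ∀ t ∈ Icc a b, HasDerivAt d (c / d t) t) {t : ℝ} (ht : t ∈ Icc a b) : d t ≠ 0 := by
  have hmono : d a ^ 2 ≤ d t ^ 2 :=
    monotoneOn_sq_of_hasDerivAt_div hc hd (left_mem_Icc.mpr (ht.1.trans ht.2)) ht ht.1
  exact fun h => ha (by simpa [h] using hmono)

theorem sq_eq_of_hasDerivAt_div (hc : 0 ≤ c) (ha : d a ≠ 0)
    (hd : ∀ t ∈ Icc a b, HasDerivAt d (c / d t) t) {t : ℝ} (ht : t ∈ Icc a b) :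
    d t ^ 2 = d a ^ 2 + 2 * c * (t - a) := by
  have hderiv : ∀ s ∈ Icc a b, HasDerivAt (fun s => d s ^ 2 - 2 * c * s) 0 s := fun s hs => by
    have h := (hasDerivAt_sq_of_hasDerivAt_div (hd s hs)).sub
      ((hasDerivAt_id s).const_mul (2 * c))
    rwa [if_neg (ne_zero_of_hasDerivAt_div hc ha hd hs), mul_one, sub_self] at h
  have hconst := constant_of_has_deriv_right_zero
    (fun s hs => (hderiv s hs).continuousAt.continuousWithinAt)
    (fun s hs => (hderiv s (Ico_subset_Icc_self hs)).hasDerivWithinAt) t ht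
  linarith

theorem eq_sign_mul_sqrt_of_hasDerivAt_div (hc : 0 ≤ c) (ha : d a ≠ 0)
    (hd : ∀ t ∈ Icc a b, HasDerivAt d (c / d t) t) {t : ℝ} (ht : t ∈ Icc a b) :
    d t = Real.sign (d a) * Real.sqrt (d a ^ 2 + 2 * c * (t - a)) := by
  rw [← sq_eq_of_hasDerivAt_div hc ha hd ht, Real.sqrt_sq_eq_abs]
  exact isPreconnected_Icc.eq_sign_mul_abs_of_ne_zero
    (fun s hs => (hd s hs).continuousAt.continuousWithinAt)
    (fun s hs => ne_zero_of_hasDerivAt_div hc ha hd hs) ht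
    (left_mem_Icc.mpr (ht.1.trans ht.2))

end DivODE

/-- Exact solution of the two-particle Coulomb step in 1D: for
`ẋ = 1/(x - y)`, `ẏ = 1/(y - x)` with `x(0) ≠ y(0)`, at time `τ ≥ 0`
`x(τ) = ½(x(0)+y(0)) + ½ sgn(x(0)-y(0)) √((x(0)-y(0))² + 4τ)` and
`y(τ) = ½(x(0)+y(0)) - ½ sgn(x(0)-y(0)) √((x(0)-y(0))² + 4τ)`; in particular the sum
`x + y` is conserved and `(x - y)²` grows linearly with rate `4`. -/
theorem stmt_11 (x y : ℝ → ℝ) (τ : ℝ) (hτ : 0 ≤ τ)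
    (h0 : x 0 ≠ y 0)
    (hx : ∀ t ∈ Set.Icc 0 τ, HasDerivAt x (1 / (x t - y t)) t)
    (hy : ∀ t ∈ Set.Icc 0 τ, HasDerivAt y (1 / (y t - x t)) t) :
    x τ = (x 0 + y 0) / 2
        + Real.sign (x 0 - y 0) * Real.sqrt ((x 0 - y 0) ^ 2 + 4 * τ) / 2
    ∧ y τ = (x 0 + y 0) / 2
        - Real.sign (x 0 - y 0) * Real.sqrt ((x 0 - y 0) ^ 2 + 4 * τ) / 2
    ∧ (∀ t ∈ Set.Icc 0 τ, x t + y t = x 0 + y 0)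
    ∧ (∀ t ∈ Set.Icc 0 τ, (x t - y t) ^ 2 = (x 0 - y 0) ^ 2 + 4 * t) := by
  have hsum : ∀ t ∈ Icc 0 τ, HasDerivAt (fun t => x t + y t) 0 t := fun t ht => by
    refine ((hx t ht).add (hy t ht)).congr_deriv ?_
    rw [← neg_sub, div_neg, neg_add_cancel]
  have hdiff : ∀ t ∈ Icc 0 τ, HasDerivAt (fun t => x t - y t) (2 / (x t - y t)) t :=
    fun t ht => by
      refine ((hx t ht).sub (hy t ht)).congr_deriv ?_
      rw [← neg_sub (x t), div_neg]; ring
  have hd0 : x 0 - y 0 ≠ 0 := sub_ne_zero.mpr h0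
  have hconserved : ∀ t ∈ Icc 0 τ, x t + y t = x 0 + y 0 :=
    constant_of_has_deriv_right_zero (fun t ht => (hsum t ht).continuousAt.continuousWithinAt)
      (fun t ht => (hsum t (Ico_subset_Icc_self ht)).hasDerivWithinAt)
  have hτ_mem : τ ∈ Icc 0 τ := right_mem_Icc.mpr hτ
  have hdτ := eq_sign_mul_sqrt_of_hasDerivAt_div (d := fun t => x t - y t)
    zero_le_two hd0 hdiff hτ_mem
  have hsτ := hconserved τ hτ_mem
  simp only [sub_zero, show (2 : ℝ) * 2 = 4 by norm_num] at hdτ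
  refine ⟨by linarith, by linarith, hconserved, fun t ht => ?_⟩
  simpa [show (2 : ℝ) * 2 = 4 by norm_num] using
    sq_eq_of_hasDerivAt_div (d := fun t => x t - y t) zero_le_two hd0 hdiff ht
end

section
/- Suppose $m \mapsto u_m \ge 0$ satisfies $u_{m} \le e^{-2\alpha \tau} u_{m-1} + C\tau(\sqrt{u_{m-1}} + \sqrt{u_m})\tau' + A\tau$ for all $m \ge 1$ with $u_0 = 0$, where $\alpha, C, A, \tau > 0$ and $\tau' \le \tau$, and assume $2\alpha\tau \le 1$. Then $\sup_m u_m \le C'(\tau'^2 + A/\alpha)$ for some constant $C'$ depending only on $C$ and $\alpha$. -/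
set_option maxHeartbeats 1000000 in
/-- Discrete Grönwall-type inequality for the per-time-step error recursion: if
`u₀ = 0`, `u_m ≥ 0` and `u_m ≤ e^{-2ατ} u_{m-1} + Cτ(√u_{m-1} + √u_m)τ' + Aτ` with
`τ' ≤ τ` and `2ατ ≤ 1`, then `sup_m u_m ≤ C'(τ'² + A/α)` for some `C'` depending only on
`C` and `α`. -/
theorem stmt_19 (C α : ℝ) (hC : 0 < C) (hα : 0 < α) :
    ∃ C' : ℝ, 0 < C' ∧
      ∀ (τ τ' A : ℝ) (u : ℕ → ℝ),
        0 < τ → 0 < τ' → τ' ≤ τ → 0 < A → 2 * α * τ ≤ 1 →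
        u 0 = 0 → (∀ m, 0 ≤ u m) →
        (∀ m : ℕ, u (m + 1) ≤ Real.exp (-2 * α * τ) * u m
            + C * τ * (Real.sqrt (u m) + Real.sqrt (u (m + 1))) * τ' + A * τ) →
        ∀ m, u m ≤ C' * (τ' ^ 2 + A / α) := by
  refine ⟨max (16 * C ^ 2 / α ^ 2) 2, lt_of_lt_of_le two_pos (le_max_right _ _), ?_⟩
  intro τ τ' A u hτ hτ' hττ' hA hατ hu0 hupos hrec
  set C' : ℝ := max (16 * C ^ 2 / α ^ 2) 2 with hC'def
  have hC'2 : (2:ℝ) ≤ C' := le_max_right _ _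
  have hC'1 : 16 * C ^ 2 / α ^ 2 ≤ C' := le_max_left _ _
  set M : ℝ := C' * (τ' ^ 2 + A / α) with hMdef
  have hAα : 0 < A / α := div_pos hA hα
  have hMpos : 0 < M := by
    have : (0:ℝ) < τ' ^ 2 + A / α := by positivity
    exact mul_pos (lt_of_lt_of_le two_pos hC'2) this
  set S : ℝ := Real.sqrt M with hSdef
  have hSpos : 0 < S := Real.sqrt_pos.mpr hMpos
  have hS2 : S ^ 2 = M := Real.sq_sqrt hMpos.le
  -- key size facts about M
  have hM1 : 16 * C ^ 2 / α ^ 2 * τ' ^ 2 ≤ M := by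
    have h2 : 0 < τ' ^ 2 := by positivity
    calc 16 * C ^ 2 / α ^ 2 * τ' ^ 2 ≤ C' * τ' ^ 2 :=
          mul_le_mul_of_nonneg_right hC'1 h2.le
      _ ≤ M := by
          rw [hMdef]; nlinarith [lt_of_lt_of_le two_pos hC'2]
  have hM2 : 2 * A ≤ α * M := by
    have h1 : 2 * (A / α) ≤ C' * (τ' ^ 2 + A / α) := by nlinarith [sq_nonneg τ', lt_of_lt_of_le two_pos hC'2]
    have h2 := mul_le_mul_of_nonneg_left h1 hα.le
    have h3 : α * (2 * (A / α)) = 2 * A := by field_simp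
    rw [h3] at h2
    rw [hMdef]; linarith
  have hCS : 4 * C * τ' ≤ α * S := by
    have h : 4 * C * τ' / α ≤ S := by
      rw [hSdef, Real.le_sqrt (by positivity) hMpos.le]
      have : (4 * C * τ' / α) ^ 2 = 16 * C ^ 2 / α ^ 2 * τ' ^ 2 := by
        field_simp
        ring
      rw [this]; exact hM1
    calc 4 * C * τ' = α * (4 * C * τ' / α) := by field_simp
      _ ≤ α * S := mul_le_mul_of_nonneg_left h hα.le
  have hατ1 : α * τ ≤ 1 / 2 := by linarith
  -- exponential bound
  have hexp : Real.exp (-2 * α * τ) ≤ 1 - α * τ := by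
    have h := Real.add_one_le_exp (2 * α * τ)
    have hpos := Real.exp_pos (2 * α * τ)
    have h1 : (1:ℝ) ≤ (1 - α * τ) * Real.exp (2 * α * τ) := by
      nlinarith [mul_le_mul_of_nonneg_left h (show (0:ℝ) ≤ 1 - α * τ by linarith),
        mul_nonneg (mul_nonneg hα.le hτ.le) (show (0:ℝ) ≤ 1 - 2 * α * τ by linarith)]
    have : Real.exp (-2 * α * τ) = 1 / Real.exp (2 * α * τ) := by
      rw [show (-2 * α * τ) = -(2 * α * τ) by ring, Real.exp_neg, one_div]
    rw [this, div_le_iff₀ hpos]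
    linarith
  -- induction
  intro m
  induction m with
  | zero => rw [hu0]; exact hMpos.le
  | succ m ih =>
    have hv := hrec m
    set v := u (m + 1) with hvdef
    set sm := Real.sqrt (u m) with hsm
    set sv := Real.sqrt v with hsv
    have hsm0 : 0 ≤ sm := Real.sqrt_nonneg _
    have hsv0 : 0 ≤ sv := Real.sqrt_nonneg _
    have hsmS : sm ≤ S := Real.sqrt_le_sqrt ih
    have hsv2 : sv ^ 2 = v := Real.sq_sqrt (hupos (m + 1))
    have hf4 : 2 * sv * S ≤ v + M := by nlinarith [sq_nonneg (sv - S)]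
    -- bound E * u m
    have hE : Real.exp (-2 * α * τ) * u m ≤ (1 - α * τ) * M :=
      mul_le_mul hexp ih (hupos m) (by linarith)
    -- term 1 : C*τ*τ'*sm ≤ α*τ*M/4
    have ht1 : C * τ * τ' * sm ≤ α * τ * M / 4 := by
      have h1 : C * τ' * (τ * sm) ≤ (α * S / 4) * (τ * S) := by
        apply mul_le_mul (by linarith) (mul_le_mul_of_nonneg_left hsmS hτ.le)
          (by positivity) (by positivity)
      have h2 : (α * S / 4) * (τ * S) = α * τ * S ^ 2 / 4 := by ring
      rw [h2, hS2] at h1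
      linarith [h1]
    -- term 2 : C*τ*τ'*sv ≤ (α*τ/8)*(v+M)
    have ht2 : C * τ * τ' * sv ≤ α * τ / 8 * (v + M) := by
      have h1 : C * τ' * (τ * sv) ≤ (α * S / 4) * (τ * sv) := by
        apply mul_le_mul_of_nonneg_right (by linarith) (by positivity)
      have h2 : (α * S / 4) * (τ * sv) = (α * τ / 8) * (2 * sv * S) := by ring
      rw [h2] at h1
      have h3 : (α * τ / 8) * (2 * sv * S) ≤ α * τ / 8 * (v + M) :=
        mul_le_mul_of_nonneg_left hf4 (by positivity)
      calc C * τ * τ' * sv = C * τ' * (τ * sv) := by ring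
        _ ≤ _ := le_trans h1 h3
    have hAτ : A * τ ≤ α * τ * M / 2 := by
      linarith [mul_le_mul_of_nonneg_right hM2 hτ.le]
    have hv' : v ≤ Real.exp (-2 * α * τ) * u m + (C * τ * τ' * sm + C * τ * τ' * sv) + A * τ := by
      have hsplit : C * τ * (sm + sv) * τ' = C * τ * τ' * sm + C * τ * τ' * sv := by ring
      linarith [hv, hsplit.ge, hsplit.le]
    clear_value v sm sv S M C'
    clear hv hrec hMdef hSdef hC'def hsm hsv hvdef hM1 hM2 hCS hC'1 hC'2 hu0 ih hexp hsmS hf4 hsv2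
    have hvle : v ≤ M + α * τ / 8 * (v - M) := by linarith
    have h8 : (1 - α * τ / 8) * (v - M) ≤ 0 := by nlinarith [hvle]
    have h9 : (0:ℝ) < 1 - α * τ / 8 := by linarith
    by_contra hcon
    push_neg at hcon
    nlinarith [mul_pos h9 (sub_pos.mpr hcon)]
end
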